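/- arXiv:2506.12393 — 3 statements merged into one kernel-verified Lean document; each statement's English description precedes it below -/
import Mathlib

section
/- Assume the diamond principle ♦ holds. Then there exists a family (B_α : α < ω₁) of pairwise disjoint stationary subsets of ω₁ whose union is all of ω₁; in particular, ω₁ can be partitioned into ω₁-many stationary sets. -/
noncomputable section

/-- The first uncountable ordinal `ω₁`. -/
def omega1 : Ordinal.{0} := (Cardinal.aleph 1).ord

/-- A club (closed unbounded) subset of `ω₁`. -/
def IsClubOmega1 (C : Set Ordinal) : Prop :=
  C ⊆ Set.Iio omega1 ∧
  (∀ β < omega1, ∃ γ ∈ C, β ≤ γ) ∧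
  (∀ α < omega1, Order.IsSuccLimit α → (∀ β < α, ∃ γ ∈ C, β ≤ γ ∧ γ < α) → α ∈ C)

/-- A stationary subset of `ω₁`: one meeting every club. -/
def IsStationaryIn (S : Set Ordinal) : Prop :=
  S ⊆ Set.Iio omega1 ∧ ∀ C : Set Ordinal, IsClubOmega1 C → (S ∩ C).Nonempty

/-- The diamond principle `♦`. -/
def DiamondPrinciple : Prop :=
  ∃ a : Ordinal → Set Ordinal,
    (∀ α, α < omega1 → a α ⊆ Set.Iio α) ∧
    ∀ A : Set Ordinal, A ⊆ Set.Iio omega1 →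
      IsStationaryIn {α | α < omega1 ∧ A ∩ Set.Iio α = a α}

open Classical in
/-- The level of a node of a tree: the order type of its set of strict
predecessors (defaulting to `0` when that set is not well-ordered). -/
noncomputable def levelOf {β : Type} [Preorder β] (x : β) : Ordinal :=
  if h : IsWellOrder {y : β // y < x} (· < ·) then
    @Ordinal.type {y : β // y < x} (· < ·) h
  else 0

/-- A tree order: the strict predecessors of every node are well-ordered. -/
def IsTreeOrder (β : Type) [Preorder β] : Prop :=
  ∀ x : β, IsWellOrder {y : β // y < x} (· < ·)

/-- The height of a tree: the supremum of the successors of the levels of its nodes. -/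
noncomputable def heightOf (β : Type) [Preorder β] : Ordinal :=
  ⨆ x : β, (levelOf x + 1)

/-- A Suslin tree: a tree of height `ω₁` all of whose chains and antichains
(in the tree sense: sets of pairwise incomparable nodes) are countable. -/
def IsSuslinTree (β : Type) [PartialOrder β] : Prop :=
  IsTreeOrder β ∧ heightOf β = omega1 ∧
  (∀ C : Set β, IsChain (· ≤ ·) C → C.Countable) ∧
  (∀ A : Set β, (A.Pairwise fun x y => ¬ x ≤ y ∧ ¬ y ≤ x) → A.Countable)

/-- Compatibility (forcing sense): a common lower bound exists. -/
def Compat {P : Type*} [Preorder P] (p q : P) : Prop := ∃ r, r ≤ p ∧ r ≤ q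

/-- The countable chain condition: every set of pairwise incompatible elements is countable. -/
def CCC (P : Type*) [Preorder P] : Prop :=
  ∀ A : Set P, (A.Pairwise fun p q => ¬ Compat p q) → A.Countable

/-- Compatibility in the upward sense: a common upper bound exists. -/
def UpCompat {P : Type*} [Preorder P] (p q : P) : Prop := ∃ r, p ≤ r ∧ q ≤ r

/-- The countable chain condition with compatibility read as the existence of
common upper bounds. -/
def CCCUp (P : Type*) [Preorder P] : Prop :=
  ∀ A : Set P, (A.Pairwise fun p q => ¬ UpCompat p q) → A.Countable

/-- The Knaster property. -/
def Knaster (P : Type*) [Preorder P] : Prop :=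
  ∀ A : Set P, ¬ A.Countable → ∃ B ⊆ A, ¬ B.Countable ∧ B.Pairwise Compat

/-- A bundled partial order. -/
structure PoCarrier : Type 1 where
  carrier : Type
  po : PartialOrder carrier

attribute [instance] PoCarrier.po

/-!
Apply `♦` to every singleton `{β}`: the set of `α > β` at which the guess `a α` equals `{β}` is
stationary, and these sets are pairwise disjoint because `a α` determines `β`. Adding to one of
them the points of `ω₁` that none of them contains gives the partition.
-/

open Function

theorem omega1_isSuccLimit : Order.IsSuccLimit omega1 :=
  Cardinal.isSuccLimit_ord (Cardinal.aleph0_le_aleph 1)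

theorem IsClubOmega1.inter_Ioi {C : Set Ordinal} (hC : IsClubOmega1 C) {β : Ordinal}
    (hβ : β < omega1) : IsClubOmega1 (C ∩ Set.Ioi β) := by
  obtain ⟨hsub, hunb, hclosed⟩ := hC
  refine ⟨fun γ hγ => hsub hγ.1, fun δ hδ => ?_, fun α hα hlim hcof => ⟨?_, ?_⟩⟩
  · obtain ⟨γ, hγC, hγ⟩ := hunb _ (omega1_isSuccLimit.succ_lt (max_lt hβ hδ))
    have hmax : max β δ < γ := (Order.lt_succ _).trans_le hγ
    exact ⟨γ, ⟨hγC, (le_max_left β δ).trans_lt hmax⟩, (le_max_right β δ).trans hmax.le⟩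
  · refine hclosed α hα hlim fun δ hδ => ?_
    obtain ⟨γ, hγ, hδγ, hγα⟩ := hcof δ hδ
    exact ⟨γ, hγ.1, hδγ, hγα⟩
  · obtain ⟨γ, hγ, -, hγα⟩ := hcof 0 hlim.bot_lt
    exact hγ.2.trans hγα

theorem IsStationaryIn.inter_Ioi {S : Set Ordinal} (hS : IsStationaryIn S) {β : Ordinal}
    (hβ : β < omega1) : IsStationaryIn (S ∩ Set.Ioi β) := by
  refine ⟨fun α hα => hS.1 hα.1, fun C hC => ?_⟩
  obtain ⟨α, hαS, hαC, hβα⟩ := hS.2 _ (hC.inter_Ioi hβ)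
  exact ⟨α, ⟨hαS, hβα⟩, hαC⟩

theorem IsStationaryIn.mono {S S' : Set Ordinal} (hS : IsStationaryIn S) (h : S ⊆ S')
    (h' : S' ⊆ Set.Iio omega1) : IsStationaryIn S' :=
  ⟨h', fun C hC => (hS.2 C hC).mono (Set.inter_subset_inter_left _ h)⟩

theorem exists_partition_of_pairwise_disjoint {ι X : Type*} [DecidableEq ι] {U : Set X}
    {T : ι → Set X} (hTU : ∀ i, T i ⊆ U) (hT : Pairwise (Disjoint on T)) (i₀ : ι) :
    ∃ B : ι → Set X, (∀ i, T i ⊆ B i) ∧ (∀ i, B i ⊆ U) ∧ Pairwise (Disjoint on B) ∧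
      ⋃ i, B i = U := by
  set R := U \ ⋃ i, T i
  have hRT : ∀ i, Disjoint R (T i) := fun i =>
    Set.disjoint_sdiff_left.mono_right (Set.subset_iUnion T i)
  let extra : ι → Set X := fun i => if i = i₀ then R else ∅
  have hextra : ∀ i, extra i ⊆ R := fun i => by
    by_cases hi : i = i₀ <;> simp [extra, hi]
  refine ⟨fun i => T i ∪ extra i, fun i => Set.subset_union_left,
    fun i => Set.union_subset (hTU i) ((hextra i).trans Set.sdiff_subset), fun i j hij => ?_, ?_⟩
  · have hextra_disj : Disjoint (extra i) (extra j) := by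
      by_cases hi : i = i₀
      · subst hi
        simp [extra, hij.symm]
      · simp [extra, hi]
    exact Disjoint.union_left
      (Disjoint.union_right (hT hij) ((hRT i).symm.mono_right (hextra j)))
      (Disjoint.union_right ((hRT j).mono_left (hextra i)) hextra_disj)
  · have hR : ⋃ i, extra i = R :=
      (Set.iUnion_subset hextra).antisymm (Set.subset_iUnion_of_subset i₀ (by simp [extra]))
    rw [Set.iUnion_union_distrib, hR, Set.union_sdiff_self]
    exact Set.union_eq_right.2 (Set.iUnion_subset hTU)

theorem DiamondPrinciple.exists_pairwise_disjoint_stationary (hD : DiamondPrinciple) :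
    ∃ T : Ordinal → Set Ordinal,
      (∀ β < omega1, IsStationaryIn (T β)) ∧ Pairwise (Disjoint on T) := by
  obtain ⟨a, -, ha⟩ := hD
  refine ⟨fun β => {α | α < omega1 ∧ {β} ∩ Set.Iio α = a α} ∩ Set.Ioi β,
    fun β hβ => (ha {β} (Set.singleton_subset_iff.2 hβ)).inter_Ioi hβ, ?_⟩
  intro β γ hne
  refine Set.disjoint_left.2 fun α ⟨⟨_, hβa⟩, hβα⟩ ⟨⟨_, hγa⟩, hγα⟩ => hne ?_
  have hβ : {β} ∩ Set.Iio α = {β} := Set.inter_eq_left.2 (Set.singleton_subset_iff.2 hβα)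
  have hγ : {γ} ∩ Set.Iio α = {γ} := Set.inter_eq_left.2 (Set.singleton_subset_iff.2 hγα)
  rw [← Set.singleton_eq_singleton_iff, ← hβ, ← hγ, hβa, hγa]

/-- Assume `♦`. Then `ω₁` can be partitioned into `ω₁`-many
stationary sets: there is a family `(B_α : α < ω₁)` of pairwise disjoint
stationary subsets of `ω₁` whose union is all of `ω₁`. -/
theorem stationary_partition_of_diamond (hD : DiamondPrinciple) :
    ∃ B : Set.Iio omega1 → Set Ordinal,
      (∀ i, IsStationaryIn (B i)) ∧
      (∀ i j, i ≠ j → Disjoint (B i) (B j)) ∧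
      (⋃ i, B i) = Set.Iio omega1 := by
  classical
  obtain ⟨T, hTstat, hTdisj⟩ := hD.exists_pairwise_disjoint_stationary
  obtain ⟨B, hTB, hBU, hBdisj, hBunion⟩ := exists_partition_of_pairwise_disjoint
    (T := fun i : Set.Iio omega1 => T i) (U := Set.Iio omega1)
    (fun i => (hTstat i i.2).1) (fun i j hij => hTdisj (Subtype.coe_ne_coe.2 hij))
    ⟨0, omega1_isSuccLimit.bot_lt⟩
  exact ⟨B, fun i => (hTstat i i.2).mono (hTB i) (hBU i), hBdisj, hBunion⟩

end
end

section
/- Let P be a partial order with the Knaster property and let Q be a partial order with the countable chain condition. Then the product P × Q, ordered coordinatewise, has the countable chain condition. -/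
noncomputable section

/-! If `A ⊆ P × Q` is an antichain whose first coordinates are pairwise compatible, then the
second coordinates of distinct elements of `A` are incompatible, so `A` embeds into an
antichain of `Q`. Each fibre of `A` over `P` is such a set, so for an uncountable antichain `A`
the projection to `P` is uncountable; the Knaster property then yields an uncountable part of
`A` with pairwise compatible first coordinates, which is impossible. -/

theorem Compat.refl {P : Type*} [Preorder P] (p : P) : Compat p p := ⟨p, le_rfl, le_rfl⟩

theorem Compat.prod {P Q : Type*} [Preorder P] [Preorder Q] {a b : P × Q}
    (h₁ : Compat a.1 b.1) (h₂ : Compat a.2 b.2) : Compat a b :=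
  let ⟨r₁, hr₁a, hr₁b⟩ := h₁
  let ⟨r₂, hr₂a, hr₂b⟩ := h₂
  ⟨(r₁, r₂), ⟨hr₁a, hr₂a⟩, ⟨hr₁b, hr₂b⟩⟩

theorem Set.Countable.of_countable_fibers {α β : Type*} (f : α → β) {s : Set α}
    (himage : (f '' s).Countable) (hfibers : ∀ y ∈ f '' s, (s ∩ f ⁻¹' {y}).Countable) :
    s.Countable :=
  (himage.biUnion hfibers).mono fun x hx =>
    Set.mem_biUnion (Set.mem_image_of_mem f hx) (show x ∈ s ∩ f ⁻¹' {f x} from ⟨hx, rfl⟩)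

namespace CCC

variable {P Q : Type*} [Preorder P] [Preorder Q]

theorem countable_of_pairwise_compat_fst (hQ : CCC Q) {A : Set (P × Q)}
    (hA : A.Pairwise fun a b => ¬ Compat a b) (hfst : (Prod.fst '' A).Pairwise Compat) :
    A.Countable := by
  have hsnd : A.Pairwise fun a b => ¬ Compat a.2 b.2 := by
    intro a ha b hb hab hq
    have hp : Compat a.1 b.1 := by
      rcases eq_or_ne a.1 b.1 with h | h
      · exact h ▸ Compat.refl _
      · exact hfst (Set.mem_image_of_mem _ ha) (Set.mem_image_of_mem _ hb) h
    exact hA ha hb hab (hp.prod hq)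
  have hinj : Set.InjOn Prod.snd A := fun a ha b hb h =>
    by_contra fun hab => hsnd ha hb hab (h ▸ Compat.refl _)
  exact Set.countable_of_injective_of_countable_image hinj (hQ _ (hinj.pairwise_image.2 hsnd))

theorem countable_of_countable_fst_image (hQ : CCC Q) {A : Set (P × Q)}
    (hA : A.Pairwise fun a b => ¬ Compat a b) (himage : (Prod.fst '' A).Countable) :
    A.Countable :=
  himage.of_countable_fibers Prod.fst fun p _ =>
    hQ.countable_of_pairwise_compat_fst (hA.mono Set.inter_subset_left)
      ((Set.pairwise_singleton p Compat).mono
        ((Set.image_mono Set.inter_subset_right).trans (Set.image_preimage_subset _ _)))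

end CCC

/-- The coordinatewise product of a partial order with the
Knaster property and a partial order with the countable chain condition has
the countable chain condition. -/
theorem ccc_prod_of_knaster_of_ccc {P Q : Type*} [PartialOrder P] [PartialOrder Q]
    (hP : Knaster P) (hQ : CCC Q) : CCC (P × Q) := by
  intro A hA
  by_contra hAc
  obtain ⟨C, hCA, hCc, hC⟩ :=
    hP _ (mt (hQ.countable_of_countable_fst_image hA) hAc)
  have hfst : Prod.fst '' (A ∩ Prod.fst ⁻¹' C) = C := by
    rw [Set.image_inter_preimage, Set.inter_eq_right.2 hCA]
  have hAC : (A ∩ Prod.fst ⁻¹' C).Countable :=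
    hQ.countable_of_pairwise_compat_fst (hA.mono Set.inter_subset_left) (hfst.symm ▸ hC)
  exact hCc (hfst ▸ hAC.image Prod.fst)

end
end

section
/- Let n ∈ ω and let T^0, …, T^n be trees of height ω₁ all of whose levels are countable, and let P = T^0 × ⋯ × T^n be their product, ordered coordinatewise by the tree orders, where two tuples are compatible iff they have a common coordinatewise upper bound. For α < ω₁ let P↾α be the set of tuples all of whose coordinates have tree-level below α. If A ⊆ P is a maximal antichain of P, then the set {α < ω₁ : A ∩ P↾α is a maximal antichain of P↾α} contains a closed unbounded subset of ω₁. -/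
noncomputable section

/-- `A` is a maximal antichain of the subset `S` of `P` (with compatibility
read as the existence of a common coordinatewise upper bound): `A ⊆ S`, the
elements of `A` are pairwise incompatible, and every element of `S` is
compatible with some element of `A`. -/
def MaxUpAntichainIn (P : Type*) [Preorder P] (S A : Set P) : Prop :=
  A ⊆ S ∧ (A.Pairwise fun p q => ¬ UpCompat p q) ∧ ∀ p ∈ S, ∃ a ∈ A, UpCompat p a

/-! Pick for every `p ∈ P` a partner `w p ∈ A` compatible with it. Since `P↾(β+1)` is countable
for `β < ω₁`, the levels of the partners of its elements are bounded by some `g β < ω₁`, and at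
every `α < ω₁` closed under `g` the partner of each `p ∈ P↾α` again lies in `P↾α`. These closure
points form a club: from any `β`, iterating `δ ↦ sup_{ε<δ} g ε` `ω` times reaches one. -/

open Ordinal Order

lemma omega1_eq_omega_one : omega1 = ω₁ := by
  simp [omega1, Cardinal.ord_aleph]

lemma add_one_lt_omega1 {α : Ordinal} (h : α < omega1) : α + 1 < omega1 := by
  rw [omega1_eq_omega_one] at h ⊢
  exact (Cardinal.isSuccLimit_omega 1).add_one_lt h

lemma countable_Iio_of_lt_omega1 {α : Ordinal} (h : α < omega1) : (Set.Iio α).Countable := by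
  rw [← Cardinal.le_aleph0_iff_set_countable, Cardinal.mk_Iio_ordinal, Cardinal.lift_le_aleph0,
    ← lt_succ_iff, Cardinal.succ_aleph0]
  exact Cardinal.lt_ord.1 h

lemma countable_setOf_lt_of_countable_fibers {X : Type*} (f : X → Ordinal.{0})
    (hf : ∀ β, {x | f x = β}.Countable) {α : Ordinal} (hα : α < omega1) :
    {x | f x < α}.Countable :=
  ((countable_Iio_of_lt_omega1 hα).biUnion fun β _ => hf β).mono
    fun x hx => Set.mem_biUnion (x := f x) hx rfl

lemma exists_lt_omega1_forall_lt {ι : Type*} {s : Set ι} (hs : s.Countable)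
    {f : ι → Ordinal.{0}} (hf : ∀ i ∈ s, f i < omega1) :
    ∃ γ < omega1, ∀ i ∈ s, f i < γ := by
  have := hs.to_subtype
  refine ⟨⨆ i : s, (f i + 1), ?_, fun i hi => ?_⟩
  · rw [omega1_eq_omega_one]
    exact iSup_lt_omega_one fun i => omega1_eq_omega_one ▸ add_one_lt_omega1 (hf i i.2)
  · exact (lt_add_one _).trans_le (Ordinal.le_iSup (fun i : s => f i + 1) ⟨i, hi⟩)

def closurePoints (g : Ordinal → Ordinal) : Set Ordinal :=
  {α | α < omega1 ∧ ∀ β < α, g β < α}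

lemma exists_mem_closurePoints_ge {g : Ordinal → Ordinal} (hg : ∀ β < omega1, g β < omega1)
    {β : Ordinal} (hβ : β < omega1) : ∃ α ∈ closurePoints g, β ≤ α := by
  choose! F hF_lt hF using fun δ (hδ : δ < omega1) =>
    exists_lt_omega1_forall_lt (countable_Iio_of_lt_omega1 hδ) fun ε hε => hg ε (hε.trans hδ)
  have haleph0_lt_cof : Cardinal.aleph0 < omega1.cof := by
    simp [omega1_eq_omega_one]
  have hα : nfp F β < omega1 := nfp_lt_ord haleph0_lt_cof hF_lt hβ
  refine ⟨nfp F β, ⟨hα, fun γ hγ => ?_⟩, le_nfp F β⟩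
  obtain ⟨k, hk⟩ := lt_nfp_iff.1 hγ
  calc g γ < F (F^[k] β) := hF _ ((iterate_le_nfp F β k).trans_lt hα) γ hk
    _ = F^[k + 1] β := (Function.iterate_succ_apply' F k β).symm
    _ ≤ nfp F β := iterate_le_nfp F β (k + 1)

lemma isClubOmega1_closurePoints {g : Ordinal → Ordinal} (hg : ∀ β < omega1, g β < omega1) :
    IsClubOmega1 (closurePoints g) := by
  refine ⟨fun α hα => hα.1, fun β hβ => exists_mem_closurePoints_ge hg hβ, ?_⟩
  intro α hα hlim hcofinal
  refine ⟨hα, fun β hβ => ?_⟩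
  obtain ⟨γ, hγ, hβγ, hγα⟩ := hcofinal (succ β) (hlim.succ_lt hβ)
  exact (hγ.2 β (succ_le_iff.1 hβγ)).trans hγα

theorem exists_isClubOmega1_forall_rank_lt {P : Type*} (R : P → P → Prop) (A : Set P)
    (ρ : P → Ordinal) (hρ : ∀ p, ρ p < omega1)
    (hcount : ∀ α < omega1, {p | ρ p < α}.Countable) (hA : ∀ p, ∃ a ∈ A, R p a) :
    ∃ C, IsClubOmega1 C ∧ ∀ α ∈ C, ∀ p, ρ p < α → ∃ a ∈ A, ρ a < α ∧ R p a := by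
  choose w hwA hw using hA
  choose! g hg_lt hg using fun β (hβ : β < omega1) =>
    exists_lt_omega1_forall_lt (hcount (β + 1) (add_one_lt_omega1 hβ)) fun p _ => hρ (w p)
  refine ⟨closurePoints g, isClubOmega1_closurePoints hg_lt,
    fun α hα p hp => ⟨w p, hwA p, ?_, hw p⟩⟩
  calc ρ (w p) < g (ρ p) := hg _ (hρ p) p (lt_add_one (ρ p))
    _ < α := hα.2 _ hp

theorem maximal_antichain_reflects_on_club_general (n : ℕ) (T : Fin (n + 1) → PoCarrier)
    (hlev : ∀ i, ∀ x : (T i).carrier, levelOf x < omega1)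
    (hcnt : ∀ i, ∀ β : Ordinal, {x : (T i).carrier | levelOf x = β}.Countable)
    (A : Set ((i : Fin (n + 1)) → (T i).carrier))
    (hA : MaxUpAntichainIn ((i : Fin (n + 1)) → (T i).carrier) Set.univ A) :
    ∃ C : Set Ordinal, IsClubOmega1 C ∧
      ∀ α ∈ C, MaxUpAntichainIn ((i : Fin (n + 1)) → (T i).carrier)
        {p | ∀ i, levelOf (p i) < α}
        (A ∩ {p | ∀ i, levelOf (p i) < α}) := by
  let ρ : ((i : Fin (n + 1)) → (T i).carrier) → Ordinal := fun p =>
    Finset.univ.sup' Finset.univ_nonempty fun i => levelOf (p i)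
  have hρ_lt {p α} : ρ p < α ↔ ∀ i, levelOf (p i) < α := by simp [ρ, Finset.sup'_lt_iff]
  have hcount : ∀ α < omega1, {p | ρ p < α}.Countable := fun α hα => by
    simpa only [hρ_lt, Set.mem_ofPred_eq] using Set.countable_pi fun i =>
      countable_setOf_lt_of_countable_fibers levelOf (hcnt i) hα
  obtain ⟨C, hC, hreflect⟩ := exists_isClubOmega1_forall_rank_lt UpCompat A ρ
    (fun p => hρ_lt.2 fun i => hlev i (p i)) hcount fun p => hA.2.2 p trivial
  refine ⟨C, hC, fun α hα => ⟨Set.inter_subset_right, hA.2.1.mono Set.inter_subset_left, ?_⟩⟩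
  intro p hp
  obtain ⟨a, haA, ha, hpa⟩ := hreflect α hα p (hρ_lt.2 hp)
  exact ⟨a, ⟨haA, hρ_lt.1 ha⟩, hpa⟩

/-- Let `T⁰, …, Tⁿ` be trees of height `ω₁` with countable
levels and let `P = T⁰ × ⋯ × Tⁿ` be their coordinatewise product, tuples being
compatible iff they have a common coordinatewise upper bound.  For `α < ω₁`
let `P↾α` be the tuples all of whose coordinates have level below `α`.  If `A`
is a maximal antichain of `P`, then the set of `α < ω₁` such that `A ∩ P↾α` is
a maximal antichain of `P↾α` contains a club of `ω₁`. -/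
theorem maximal_antichain_reflects_on_club (n : ℕ) (T : Fin (n + 1) → PoCarrier)
    (htree : ∀ i, IsTreeOrder (T i).carrier)
    (hlev : ∀ i, ∀ x : (T i).carrier, levelOf x < omega1)
    (hcnt : ∀ i, ∀ β : Ordinal, {x : (T i).carrier | levelOf x = β}.Countable)
    (hcof : ∀ i, ∀ β < omega1, ∃ γ, β ≤ γ ∧ γ < omega1 ∧
      {x : (T i).carrier | levelOf x = γ}.Nonempty)
    (A : Set ((i : Fin (n + 1)) → (T i).carrier))
    (hA : MaxUpAntichainIn ((i : Fin (n + 1)) → (T i).carrier) Set.univ A) :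
    ∃ C : Set Ordinal, IsClubOmega1 C ∧
      ∀ α ∈ C, MaxUpAntichainIn ((i : Fin (n + 1)) → (T i).carrier)
        {p | ∀ i, levelOf (p i) < α}
        (A ∩ {p | ∀ i, levelOf (p i) < α}) :=
  maximal_antichain_reflects_on_club_general n T hlev hcnt A hA
end
end
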